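/- arXiv:2405.09795 — 3 statements merged into one kernel-verified Lean document; each statement's English description precedes it below -/
import Mathlib

section
/- For the function U(x', x_N) = (2N)^{N/2} · x_N / ((1+x_N)² + |x'|²)^{N/2} defined on the upper half-space ℝ^N_+ with N ≥ 3, U satisfies the PDE -ΔU = x_N^{-s} U^{p-1} on ℝ^N_+, where s = 1 + 2/N and p = 2 + 2/N. -/
open MeasureTheory

noncomputable section Stmt0Aux

variable (n : ℕ)

/-- abbreviation for the space -/
local notation "Ee" => EuclideanSpace ℝ (Fin (n+1))

/-- denominator -/
def Dd (x : EuclideanSpace ℝ (Fin (n+1))) : ℝ :=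
  (1 + x (Fin.last n)) * (1 + x (Fin.last n)) + ∑ j : Fin n, x j.castSucc * x j.castSucc

lemma Dd_nonneg (x : EuclideanSpace ℝ (Fin (n+1))) : 0 ≤ Dd n x :=
  add_nonneg (mul_self_nonneg _) (Finset.sum_nonneg fun j _ => mul_self_nonneg _)

/-- derivative of Dd -/
def LD (x : EuclideanSpace ℝ (Fin (n+1))) : EuclideanSpace ℝ (Fin (n+1)) →L[ℝ] ℝ :=
  (2 * (1 + x (Fin.last n))) • EuclideanSpace.proj (𝕜 := ℝ) (Fin.last n)
    + ∑ j : Fin n, (2 * x j.castSucc) • EuclideanSpace.proj (𝕜 := ℝ) j.castSucc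

lemma LD_apply (x v : EuclideanSpace ℝ (Fin (n+1))) :
    LD n x v = 2 * (1 + x (Fin.last n)) * v (Fin.last n)
      + ∑ j : Fin n, 2 * x j.castSucc * v j.castSucc := by
  simp [LD, ContinuousLinearMap.sum_apply, mul_assoc]

lemma hasFDerivAt_Dd (x : EuclideanSpace ℝ (Fin (n+1))) :
    HasFDerivAt (Dd n) (LD n x) x := by
  have h1 : HasFDerivAt (fun y : EuclideanSpace ℝ (Fin (n+1)) =>
        (1 + y (Fin.last n)) * (1 + y (Fin.last n)))
      ((2 * (1 + x (Fin.last n))) • EuclideanSpace.proj (𝕜 := ℝ) (Fin.last n)) x := by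
    have ha := (hasFDerivAt_const (1:ℝ) x).add
      ((EuclideanSpace.proj (𝕜 := ℝ) (Fin.last n)).hasFDerivAt (x := x))
    have h := ha.mul ha
    refine h.congr_fderiv ?_
    ext v
    simp
    ring
  have h2 : ∀ j : Fin n, HasFDerivAt
      (fun y : EuclideanSpace ℝ (Fin (n+1)) => y j.castSucc * y j.castSucc)
      ((2 * x j.castSucc) • EuclideanSpace.proj (𝕜 := ℝ) j.castSucc) x := by
    intro j
    have ha := (EuclideanSpace.proj (𝕜 := ℝ) (j.castSucc : Fin (n+1))).hasFDerivAt (x := x)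
    have h := ha.mul ha
    refine h.congr_fderiv ?_
    ext v
    simp
    ring
  exact h1.add (HasFDerivAt.fun_sum fun j _ => h2 j)

/-- half-dimension exponent -/
def nu : ℝ := ((n:ℝ)+1)/2

/-- constant -/
def Cc : ℝ := (2 * ((n:ℝ)+1)) ^ (((n:ℝ)+1)/2)

/-- the explicit solution -/
def Vv (x : EuclideanSpace ℝ (Fin (n+1))) : ℝ :=
  Cc n * (x (Fin.last n) * Dd n x ^ (-nu n))

/-- derivative of Vv -/
def LV (x : EuclideanSpace ℝ (Fin (n+1))) : EuclideanSpace ℝ (Fin (n+1)) →L[ℝ] ℝ :=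
  (Cc n * Dd n x ^ (-nu n)) • EuclideanSpace.proj (𝕜 := ℝ) (Fin.last n)
    + (Cc n * x (Fin.last n) * (-nu n) * Dd n x ^ (-nu n - 1)) • LD n x

lemma hasFDerivAt_Vv (x : EuclideanSpace ℝ (Fin (n+1))) (hx : Dd n x ≠ 0) :
    HasFDerivAt (Vv n) (LV n x) x := by
  have hP := (EuclideanSpace.proj (𝕜 := ℝ) (Fin.last n)).hasFDerivAt (x := x)
  have hR := (hasFDerivAt_Dd n x).rpow_const (p := -nu n) (Or.inl hx)
  have h := (hP.mul hR).const_mul (Cc n)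
  refine h.congr_fderiv ?_
  ext v
  simp [LV]
  ring

/-- value of the gradient applied to v, as a scalar function of the base point -/
def Sv (v x : EuclideanSpace ℝ (Fin (n+1))) : ℝ :=
  2 * (1 + x (Fin.last n)) * v (Fin.last n)
    + ∑ j : Fin n, 2 * x j.castSucc * v j.castSucc

def Gg (v x : EuclideanSpace ℝ (Fin (n+1))) : ℝ :=
  Cc n * Dd n x ^ (-nu n) * v (Fin.last n)
    + (Cc n * (-nu n)) * (x (Fin.last n) * (Dd n x ^ (-nu n - 1) * Sv n v x))

lemma LV_apply (x v : EuclideanSpace ℝ (Fin (n+1))) :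
    LV n x v = Gg n v x := by
  simp [LV, Gg, Sv, LD_apply, ContinuousLinearMap.sum_apply]
  ring

/-- derivative of Sv v -/
def Qv (v : EuclideanSpace ℝ (Fin (n+1))) : EuclideanSpace ℝ (Fin (n+1)) →L[ℝ] ℝ :=
  (2 * v (Fin.last n)) • EuclideanSpace.proj (𝕜 := ℝ) (Fin.last n)
    + ∑ j : Fin n, (2 * v j.castSucc) • EuclideanSpace.proj (𝕜 := ℝ) j.castSucc

lemma hasFDerivAt_Sv (v x : EuclideanSpace ℝ (Fin (n+1))) :
    HasFDerivAt (Sv n v) (Qv n v) x := by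
  have h1 : HasFDerivAt
      (fun y : EuclideanSpace ℝ (Fin (n+1)) => 2 * (1 + y (Fin.last n)) * v (Fin.last n))
      ((2 * v (Fin.last n)) • EuclideanSpace.proj (𝕜 := ℝ) (Fin.last n)) x := by
    have h := (((hasFDerivAt_const (1:ℝ) x).add
      ((EuclideanSpace.proj (𝕜 := ℝ) (Fin.last n)).hasFDerivAt (x := x))).const_mul
        (2:ℝ)).mul_const (v (Fin.last n))
    refine h.congr_fderiv ?_
    ext w
    simp
    ring
  have h2 : ∀ j : Fin n, HasFDerivAt
      (fun y : EuclideanSpace ℝ (Fin (n+1)) => 2 * y j.castSucc * v j.castSucc)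
      ((2 * v j.castSucc) • EuclideanSpace.proj (𝕜 := ℝ) j.castSucc) x := by
    intro j
    have h := (((EuclideanSpace.proj (𝕜 := ℝ) (j.castSucc : Fin (n+1))).hasFDerivAt
      (x := x)).const_mul (2:ℝ)).mul_const (v j.castSucc)
    refine h.congr_fderiv ?_
    ext w
    simp
    ring
  exact h1.add (HasFDerivAt.fun_sum fun j _ => h2 j)

/-- second derivative CLM -/
def MM (v x : EuclideanSpace ℝ (Fin (n+1))) : EuclideanSpace ℝ (Fin (n+1)) →L[ℝ] ℝ :=
  ((Cc n * ((-nu n) * Dd n x ^ (-nu n - 1))) • LD n x).smulRight (v (Fin.last n))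
    + (Cc n * (-nu n)) •
      ((Dd n x ^ (-nu n - 1) * Sv n v x) • EuclideanSpace.proj (𝕜 := ℝ) (Fin.last n)
        + (x (Fin.last n)) •
          ((Sv n v x * ((-nu n - 1) * Dd n x ^ (-nu n - 1 - 1))) • LD n x
            + (Dd n x ^ (-nu n - 1)) • Qv n v))

lemma hasFDerivAt_Gg (v x : EuclideanSpace ℝ (Fin (n+1))) (hx : Dd n x ≠ 0) :
    HasFDerivAt (Gg n v) (MM n v x) x := by
  have hD := hasFDerivAt_Dd n x
  have hP := (EuclideanSpace.proj (𝕜 := ℝ) (Fin.last n)).hasFDerivAt (x := x)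
  have hS := hasFDerivAt_Sv n v x
  have hR1 := hD.rpow_const (p := -nu n) (Or.inl hx)
  have hR2 := hD.rpow_const (p := -nu n - 1) (Or.inl hx)
  have h1 := (hR1.const_mul (Cc n)).mul_const (v (Fin.last n))
  have h2 := (hP.mul (hR2.mul hS)).const_mul (Cc n * (-nu n))
  have h := h1.add h2
  refine h.congr_fderiv ?_
  ext w
  simp [MM]
  ring


lemma MM_castSucc (x : EuclideanSpace ℝ (Fin (n+1))) (j : Fin n) :
    MM n (EuclideanSpace.single j.castSucc 1) x (EuclideanSpace.single j.castSucc 1)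
      = Cc n * (-nu n) * (x (Fin.last n) *
          ((2 * x j.castSucc) * ((-nu n - 1) * Dd n x ^ (-nu n - 1 - 1)) * (2 * x j.castSucc)
            + Dd n x ^ (-nu n - 1) * 2)) := by
  have hlast : (EuclideanSpace.single (𝕜 := ℝ) (j.castSucc : Fin (n+1)) 1) (Fin.last n) = 0 := by
    rw [EuclideanSpace.single_apply, if_neg (Fin.castSucc_lt_last j).ne']
  have hne : Fin.last n ≠ j.castSucc := (Fin.castSucc_lt_last j).ne'
  simp [MM, LD, Qv, Sv, ContinuousLinearMap.sum_apply, hlast, EuclideanSpace.single_apply,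
    Fin.castSucc_inj, Finset.mul_sum, hne, hne.symm]
  ring

lemma MM_last (x : EuclideanSpace ℝ (Fin (n+1))) :
    MM n (EuclideanSpace.single (Fin.last n) 1) x (EuclideanSpace.single (Fin.last n) 1)
      = (Cc n * ((-nu n) * Dd n x ^ (-nu n - 1))) * (2 * (1 + x (Fin.last n)))
        + Cc n * (-nu n) * (Dd n x ^ (-nu n - 1) * (2 * (1 + x (Fin.last n)))
          + x (Fin.last n) * ((2 * (1 + x (Fin.last n)))
              * ((-nu n - 1) * Dd n x ^ (-nu n - 1 - 1)) * (2 * (1 + x (Fin.last n)))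
            + Dd n x ^ (-nu n - 1) * 2)) := by
  have hlast : ∀ k : Fin n, (EuclideanSpace.single (𝕜 := ℝ) (Fin.last n) 1) k.castSucc = 0 := by
    intro k
    rw [EuclideanSpace.single_apply, if_neg (Fin.castSucc_lt_last k).ne]
  have hne : ∀ k : Fin n, k.castSucc ≠ Fin.last n := fun k => (Fin.castSucc_lt_last k).ne
  simp [MM, LD, Qv, Sv, ContinuousLinearMap.sum_apply, hlast, EuclideanSpace.single_apply,
    Finset.mul_sum, hne]
  ring

lemma continuous_Dd : Continuous (Dd n) := by
  have hP : ∀ i : Fin (n+1), Continuous fun y : EuclideanSpace ℝ (Fin (n+1)) => y i :=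
    fun i => (EuclideanSpace.proj (𝕜 := ℝ) i).continuous
  exact ((continuous_const.add (hP (Fin.last n))).mul
      (continuous_const.add (hP (Fin.last n)))).add
    (continuous_finset_sum _ fun j _ => (hP j.castSucc).mul (hP j.castSucc))

end Stmt0Aux

/-- The Laplacian of `f : ℝ^m → ℝ`, as the sum of second partial derivatives. -/
noncomputable def lap {m : ℕ} (f : EuclideanSpace ℝ (Fin m) → ℝ)
    (x : EuclideanSpace ℝ (Fin m)) : ℝ :=
  ∑ i : Fin m,
    fderiv ℝ (fun y => fderiv ℝ f y (EuclideanSpace.single i 1)) x (EuclideanSpace.single i 1)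

/-- For `N = n+1 ≥ 3`, the function
`U(x', x_N) = (2N)^{N/2} x_N / ((1+x_N)² + |x'|²)^{N/2}` satisfies
`-ΔU = x_N^{-s} U^{p-1}` on the upper half-space, with `s = 1 + 2/N`, `p = 2 + 2/N`. -/
theorem stmt0 (n : ℕ) (hn : 3 ≤ n + 1)
    (U : EuclideanSpace ℝ (Fin (n + 1)) → ℝ)
    (hU : ∀ x : EuclideanSpace ℝ (Fin (n + 1)),
      U x = (2 * (n + 1 : ℝ)) ^ ((n + 1 : ℝ) / 2) * x (Fin.last n) /
        ((1 + x (Fin.last n)) ^ 2 + ∑ i : Fin n, x i.castSucc ^ 2) ^ ((n + 1 : ℝ) / 2)) :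
    ∀ x : EuclideanSpace ℝ (Fin (n + 1)), 0 < x (Fin.last n) →
      -lap U x = x (Fin.last n) ^ (-(1 + 2 / (n + 1 : ℝ))) *
        U x ^ ((2 + 2 / (n + 1 : ℝ)) - 1) := by
  intro x hx
  have hN : (0:ℝ) < (n:ℝ) + 1 := by positivity
  have hD0 : 0 < Dd n x := by
    have h1 : 0 < 1 + x (Fin.last n) := by linarith
    exact add_pos_of_pos_of_nonneg (mul_pos h1 h1)
      (Finset.sum_nonneg fun j _ => mul_self_nonneg _)
  have hUV : U = Vv n := by
    funext y
    have hDy : ((1 + y (Fin.last n)) ^ 2 + ∑ i : Fin n, y i.castSucc ^ 2) = Dd n y := by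
      simp only [Dd, pow_two]
    rw [hU y, hDy, show Vv n y = Cc n * (y (Fin.last n) * Dd n y ^ (-nu n)) from rfl,
      Real.rpow_neg (Dd_nonneg n y), show Cc n = (2 * ((n:ℝ)+1)) ^ (((n:ℝ)+1)/2) from rfl,
      show nu n = ((n:ℝ)+1)/2 from rfl]
    ring
  have hev0 : ∀ᶠ y in nhds x, 0 < Dd n y :=
    ((continuous_Dd n).continuousAt (x := x)).eventually (eventually_gt_nhds hD0)
  have key : ∀ i : Fin (n+1),
      fderiv ℝ (fun y => fderiv ℝ U y (EuclideanSpace.single i 1)) x (EuclideanSpace.single i 1)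
        = MM n (EuclideanSpace.single i 1) x (EuclideanSpace.single i 1) := by
    intro i
    have hev : (fun y => fderiv ℝ U y (EuclideanSpace.single i 1))
        =ᶠ[nhds x] fun y => Gg n (EuclideanSpace.single i 1) y := by
      filter_upwards [hev0] with y hy
      rw [hUV, (hasFDerivAt_Vv n y hy.ne').fderiv, LV_apply]
    rw [hev.fderiv_eq, (hasFDerivAt_Gg n _ x hD0.ne').fderiv]
  have hlap : lap U x = ∑ i : Fin (n+1),
      MM n (EuclideanSpace.single i 1) x (EuclideanSpace.single i 1) :=
    Finset.sum_congr rfl fun i _ => key i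
  -- RHS rewriting
  have hs : (2 + 2/((n:ℝ)+1)) - 1 = 1 + 2/((n:ℝ)+1) := by ring
  have hCc0 : (0:ℝ) ≤ Cc n := Real.rpow_nonneg (by positivity) _
  rw [hlap]
  have hUx : U x = Cc n * (x (Fin.last n) * Dd n x ^ (-nu n)) := by rw [hUV]; rfl
  rw [hUx, hs,
    Real.mul_rpow hCc0 (mul_nonneg hx.le (Real.rpow_nonneg (Dd_nonneg n x) _)),
    Real.mul_rpow hx.le (Real.rpow_nonneg (Dd_nonneg n x) _)]
  have hCs : Cc n ^ (1 + 2/((n:ℝ)+1)) = Cc n * (2 * ((n:ℝ)+1)) := by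
    rw [show Cc n = (2 * ((n:ℝ)+1)) ^ (((n:ℝ)+1)/2) from rfl,
      ← Real.rpow_mul (by positivity : (0:ℝ) ≤ 2*((n:ℝ)+1)),
      show (((n:ℝ)+1)/2) * (1 + 2/((n:ℝ)+1)) = ((n:ℝ)+1)/2 + 1 by field_simp,
      Real.rpow_add_one (by positivity : (2*((n:ℝ)+1)) ≠ 0)]
  have hrs : (Dd n x ^ (-nu n)) ^ (1 + 2/((n:ℝ)+1)) = Dd n x ^ (-nu n - 1) := by
    rw [← Real.rpow_mul (Dd_nonneg n x)]
    congr 1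
    rw [show nu n = ((n:ℝ)+1)/2 from rfl]
    field_simp
    ring
  rw [hCs, hrs]
  have hts : x (Fin.last n) ^ (-(1 + 2/((n:ℝ)+1))) * x (Fin.last n) ^ (1 + 2/((n:ℝ)+1)) = 1 := by
    rw [← Real.rpow_add hx, show (-(1 + 2/((n:ℝ)+1)) + (1 + 2/((n:ℝ)+1))) = 0 by ring,
      Real.rpow_zero]
  rw [show x (Fin.last n) ^ (-(1 + 2/((n:ℝ)+1))) *
      (Cc n * (2 * ((n:ℝ)+1)) * (x (Fin.last n) ^ (1 + 2/((n:ℝ)+1)) * Dd n x ^ (-nu n - 1)))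
    = (x (Fin.last n) ^ (-(1 + 2/((n:ℝ)+1))) * x (Fin.last n) ^ (1 + 2/((n:ℝ)+1))) *
      (Cc n * (2 * ((n:ℝ)+1)) * Dd n x ^ (-nu n - 1)) from by ring, hts, one_mul]
  -- LHS computation
  rw [Fin.sum_univ_castSucc]
  simp only [MM_castSucc, MM_last]
  have hbody : ∀ j : Fin n,
      Cc n * (-nu n) * (x (Fin.last n) *
        ((2 * x j.castSucc) * ((-nu n - 1) * Dd n x ^ (-nu n - 1 - 1)) * (2 * x j.castSucc)
          + Dd n x ^ (-nu n - 1) * 2))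
      = (Cc n * (-nu n) * x (Fin.last n) * 4 * (-nu n - 1) * Dd n x ^ (-nu n - 1 - 1))
          * (x j.castSucc * x j.castSucc)
        + Cc n * (-nu n) * x (Fin.last n) * 2 * Dd n x ^ (-nu n - 1) := fun j => by ring
  rw [Finset.sum_congr rfl fun j _ => hbody j, Finset.sum_add_distrib, ← Finset.mul_sum,
    Finset.sum_const, Finset.card_univ, Fintype.card_fin, nsmul_eq_mul]
  have hsum : ∑ j : Fin n, x j.castSucc * x j.castSucc
      = Dd n x - (1 + x (Fin.last n)) * (1 + x (Fin.last n)) := by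
    simp only [Dd]
    ring
  have hab : Dd n x ^ (-nu n - 1) = Dd n x ^ (-nu n - 1 - 1) * Dd n x := by
    rw [← Real.rpow_add_one hD0.ne' (-nu n - 1 - 1)]
    congr 1
    ring
  rw [hsum, hab, show nu n = ((n:ℝ)+1)/2 from rfl]
  ring
end

section
/- For the function U(x', x_N) = (N(N+2))^{N/4} · x_N / (1 + |x|²)^{N/2} defined on the upper half-space ℝ^N_+ with N ≥ 3, U satisfies the PDE -ΔU = x_N^{-s} U^{p-1} on ℝ^N_+, where s = 4/N and p = 2 + 4/N. -/
open MeasureTheory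

section aux

variable {n : ℕ}

local notation "E" => EuclideanSpace ℝ (Fin (n + 1))
local notation "ω" => Fin.last n

lemma aux_h_deriv (y : E) :
    HasFDerivAt (fun z : E => 1 + ‖z‖ ^ 2) (2 • (innerSL ℝ y)) y :=
  (hasStrictFDerivAt_norm_sq y).hasFDerivAt.const_add 1

lemma aux_h_pos (y : E) : (0:ℝ) < 1 + ‖y‖ ^ 2 := by positivity

lemma aux_B (c a : ℝ) (i : Fin (n+1)) (y : E) :
    fderiv ℝ (fun z : E => c * z ω * (1 + ‖z‖ ^ 2) ^ a) y (EuclideanSpace.single i 1)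
      = c * y ω * (a * (1 + ‖y‖ ^ 2) ^ (a - 1)) * (2 * y i)
        + (1 + ‖y‖ ^ 2) ^ a * (c * (if ω = i then 1 else 0)) := by
  have h1 : HasFDerivAt (fun z : E => c * z ω)
      (c • (EuclideanSpace.proj ω : E →L[ℝ] ℝ)) y :=
    ((EuclideanSpace.proj ω : E →L[ℝ] ℝ).hasFDerivAt).const_mul c
  have h2 : HasFDerivAt (fun z : E => (1 + ‖z‖ ^ 2) ^ a)
      ((a * (1 + ‖y‖ ^ 2) ^ (a - 1)) • (2 • (innerSL ℝ y))) y :=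
    (aux_h_deriv y).rpow_const (Or.inl (ne_of_gt (aux_h_pos y)))
  have h3 : HasFDerivAt (fun z : E => c * z ω * (1 + ‖z‖ ^ 2) ^ a) _ y := h1.mul h2
  rw [h3.fderiv]
  simp [EuclideanSpace.inner_single_right, EuclideanSpace.single_apply, real_inner_comm]
  ring

lemma aux_C (c a : ℝ) (i : Fin (n+1)) (x : E) :
    fderiv ℝ (fun z : E =>
        c * z ω * (a * (1 + ‖z‖ ^ 2) ^ (a - 1)) * (2 * z i)
          + (1 + ‖z‖ ^ 2) ^ a * (c * (if ω = i then 1 else 0))) x (EuclideanSpace.single i 1)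
      = (if ω = i then 4 * c * a * x ω * (1 + ‖x‖ ^ 2) ^ (a - 1) else 0)
        + 2 * c * a * x ω * (1 + ‖x‖ ^ 2) ^ (a - 1)
        + 4 * c * a * (a - 1) * x ω * (1 + ‖x‖ ^ 2) ^ (a - 1 - 1) * x i ^ 2 := by
  have h1 : HasFDerivAt (fun z : E => c * z ω)
      (c • (EuclideanSpace.proj ω : E →L[ℝ] ℝ)) x :=
    ((EuclideanSpace.proj ω : E →L[ℝ] ℝ).hasFDerivAt).const_mul c
  have h2 : HasFDerivAt (fun z : E => a * (1 + ‖z‖ ^ 2) ^ (a - 1))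
      (a • (((a - 1) * (1 + ‖x‖ ^ 2) ^ (a - 1 - 1)) • (2 • (innerSL ℝ x)))) x :=
    (((aux_h_deriv x).rpow_const (Or.inl (ne_of_gt (aux_h_pos x))))).const_mul a
  have h4 : HasFDerivAt (fun z : E => 2 * z i)
      ((2:ℝ) • (EuclideanSpace.proj i : E →L[ℝ] ℝ)) x :=
    ((EuclideanSpace.proj i : E →L[ℝ] ℝ).hasFDerivAt).const_mul 2
  have h2a : HasFDerivAt (fun z : E => (1 + ‖z‖ ^ 2) ^ a * (c * (if ω = i then 1 else 0)))
      ((c * (if ω = i then 1 else 0)) • ((a * (1 + ‖x‖ ^ 2) ^ (a - 1)) • (2 • (innerSL ℝ x)))) x :=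
    ((aux_h_deriv x).rpow_const (Or.inl (ne_of_gt (aux_h_pos x)))).mul_const _
  have h5 : HasFDerivAt (fun z : E =>
        c * z ω * (a * (1 + ‖z‖ ^ 2) ^ (a - 1)) * (2 * z i)
          + (1 + ‖z‖ ^ 2) ^ a * (c * (if ω = i then 1 else 0))) _ x :=
    ((h1.mul h2).mul h4).add h2a
  rw [h5.fderiv]
  rcases eq_or_ne ω i with h | h
  · subst h
    simp [EuclideanSpace.inner_single_right, EuclideanSpace.single_apply, real_inner_comm]
    ring
  · simp [EuclideanSpace.inner_single_right, EuclideanSpace.single_apply, real_inner_comm, h,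
      (Fin.ne_iff_vne _ _).mp h]
    ring

lemma aux_lap (c a : ℝ) (x : E) :
    lap (fun z : E => c * z ω * (1 + ‖z‖ ^ 2) ^ a) x
      = 4 * c * a * x ω * (1 + ‖x‖ ^ 2) ^ (a - 1)
        + (n + 1 : ℝ) * (2 * c * a * x ω * (1 + ‖x‖ ^ 2) ^ (a - 1))
        + 4 * c * a * (a - 1) * x ω * (1 + ‖x‖ ^ 2) ^ (a - 1 - 1) * ‖x‖ ^ 2 := by
  unfold lap
  have hfun : ∀ i : Fin (n+1), (fun y : E =>
      fderiv ℝ (fun z : E => c * z ω * (1 + ‖z‖ ^ 2) ^ a) y (EuclideanSpace.single i 1))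
      = fun y : E => c * y ω * (a * (1 + ‖y‖ ^ 2) ^ (a - 1)) * (2 * y i)
        + (1 + ‖y‖ ^ 2) ^ a * (c * (if ω = i then 1 else 0)) := by
    intro i; funext y; exact aux_B c a i y
  calc ∑ i : Fin (n+1), fderiv ℝ (fun y : E =>
        fderiv ℝ (fun z : E => c * z ω * (1 + ‖z‖ ^ 2) ^ a) y (EuclideanSpace.single i 1)) x
          (EuclideanSpace.single i 1)
      = ∑ i : Fin (n+1),
        ((if ω = i then 4 * c * a * x ω * (1 + ‖x‖ ^ 2) ^ (a - 1) else 0)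
          + 2 * c * a * x ω * (1 + ‖x‖ ^ 2) ^ (a - 1)
          + 4 * c * a * (a - 1) * x ω * (1 + ‖x‖ ^ 2) ^ (a - 1 - 1) * x i ^ 2) := by
        refine Finset.sum_congr rfl fun i _ => ?_
        rw [hfun i]; exact aux_C c a i x
    _ = _ := by
        rw [Finset.sum_add_distrib, Finset.sum_add_distrib, Finset.sum_ite_eq,
          if_pos (Finset.mem_univ _), Finset.sum_const, ← Finset.mul_sum]
        have hs : ∑ i : Fin (n+1), x i ^ 2 = ‖x‖ ^ 2 := by
          rw [PiLp.norm_sq_eq_of_L2]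
          exact Finset.sum_congr rfl fun i _ => by rw [Real.norm_eq_abs, sq_abs]
        rw [hs]
        simp [Finset.card_univ, nsmul_eq_mul]

end aux

/-- For `N = n+1 ≥ 3`, the function
`U(x) = (N(N+2))^{N/4} x_N / (1 + |x|²)^{N/2}` satisfies
`-ΔU = x_N^{-s} U^{p-1}` on the upper half-space, with `s = 4/N`, `p = 2 + 4/N`. -/
theorem stmt1 (n : ℕ) (hn : 3 ≤ n + 1)
    (U : EuclideanSpace ℝ (Fin (n + 1)) → ℝ)
    (hU : ∀ x : EuclideanSpace ℝ (Fin (n + 1)),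
      U x = ((n + 1 : ℝ) * ((n + 1 : ℝ) + 2)) ^ ((n + 1 : ℝ) / 4) * x (Fin.last n) /
        (1 + ‖x‖ ^ 2) ^ ((n + 1 : ℝ) / 2)) :
    ∀ x : EuclideanSpace ℝ (Fin (n + 1)), 0 < x (Fin.last n) →
      -lap U x = x (Fin.last n) ^ (-(4 / (n + 1 : ℝ))) *
        U x ^ ((2 + 4 / (n + 1 : ℝ)) - 1) := by
  intro x hx
  set N : ℝ := (n + 1 : ℝ) with hNdef
  have hN : (0:ℝ) < N := by positivity
  have hNne : N ≠ 0 := ne_of_gt hN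
  set B : ℝ := N * (N + 2) with hBdef
  have hB : (0:ℝ) < B := by positivity
  set c : ℝ := B ^ (N / 4) with hcdef
  have hc : (0:ℝ) < c := Real.rpow_pos_of_pos hB _
  set a : ℝ := -(N / 2) with hadef
  have hH : (0:ℝ) < 1 + ‖x‖ ^ 2 := aux_h_pos x
  have hUV : U = fun z : EuclideanSpace ℝ (Fin (n + 1)) =>
      c * z (Fin.last n) * (1 + ‖z‖ ^ 2) ^ a := by
    funext z
    rw [hU z, hadef, Real.rpow_neg (le_of_lt (aux_h_pos z)), div_eq_mul_inv]
  rw [hUV]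
  rw [aux_lap]
  -- value of U x
  have hHe : (1 + ‖x‖ ^ 2) ^ (a - 1) = (1 + ‖x‖ ^ 2) ^ (a - 1 - 1) * (1 + ‖x‖ ^ 2) := by
    rw [← Real.rpow_add_one (ne_of_gt hH) (a - 1 - 1)]
    congr 1; ring
  have hR : x (Fin.last n) ^ (-(4 / N)) *
      (c * x (Fin.last n) * (1 + ‖x‖ ^ 2) ^ a) ^ ((2 + 4 / N) - 1)
      = c * B * x (Fin.last n) * (1 + ‖x‖ ^ 2) ^ (a - 1 - 1) := by
    set e : ℝ := (2 + 4 / N) - 1 with hedef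
    have h1 : (c * x (Fin.last n) * (1 + ‖x‖ ^ 2) ^ a) ^ e
        = c ^ e * x (Fin.last n) ^ e * ((1 + ‖x‖ ^ 2) ^ a) ^ e := by
      rw [Real.mul_rpow (by positivity) (by positivity),
        Real.mul_rpow (le_of_lt hc) (le_of_lt hx)]
    have h2 : ((1 + ‖x‖ ^ 2) ^ a) ^ e = (1 + ‖x‖ ^ 2) ^ (a - 1 - 1) := by
      rw [← Real.rpow_mul (le_of_lt hH)]
      congr 1
      rw [hadef, hedef]; field_simp; ring
    have h3 : c ^ e = c * B := by
      rw [hcdef, ← Real.rpow_mul (le_of_lt hB)]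
      have : N / 4 * e = N / 4 + 1 := by rw [hedef]; field_simp; ring
      rw [this, Real.rpow_add_one (ne_of_gt hB)]
    have h4 : x (Fin.last n) ^ (-(4 / N)) * x (Fin.last n) ^ e = x (Fin.last n) := by
      rw [← Real.rpow_add hx]
      have : -(4 / N) + e = 1 := by rw [hedef]; field_simp; ring
      rw [this, Real.rpow_one]
    rw [h1, h2, h3]
    calc x (Fin.last n) ^ (-(4 / N)) * (c * B * x (Fin.last n) ^ e * (1 + ‖x‖ ^ 2) ^ (a - 1 - 1))
        = (x (Fin.last n) ^ (-(4 / N)) * x (Fin.last n) ^ e) * (c * B * (1 + ‖x‖ ^ 2) ^ (a - 1 - 1)) := by ring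
      _ = _ := by rw [h4]; ring
  rw [hR]
  rw [hHe, hBdef, hadef, hNdef]
  ring
end

section
/- Let A_k denote the Sturm–Liouville operator A_k(φ) = φ'' + (N-1)/r φ' - μ_k/r² φ + (p-1)ρ̃ φ on (0,1) with boundary conditions φ'(0) = 0, φ(1) = 0, where μ_k = k(k+N-2) and ρ̃ > 0. If A_1 admits a solution ξ that does not vanish in (0,1) (so A_1 is non-negative), then for every k ≥ 2, the only solution of A_k(φ) = 0 with the given boundary conditions is φ = 0. -/
open MeasureTheory Set Filter Topology

set_option maxHeartbeats 2000000 in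
private lemma core (N : ℕ) (hN : 2 ≤ N) (c : ℝ) (hc : 0 < c)
    (f f' f'' g g' g'' : ℝ → ℝ)
    (hfc : ContinuousOn f (Icc 0 1))
    (hfd : ∀ t ∈ Icc (0:ℝ) 1, HasDerivWithinAt f (f' t) (Icc 0 1) t)
    (hf'c : ContinuousOn f' (Icc 0 1))
    (hfd' : ∀ r ∈ Ioo (0:ℝ) 1, HasDerivAt f' (f'' r) r)
    (hgd : ∀ r ∈ Ioo (0:ℝ) 1, HasDerivAt g (g' r) r)
    (hgd' : ∀ r ∈ Ioo (0:ℝ) 1, HasDerivAt g' (g'' r) r)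
    (hwr : ∀ r ∈ Ioo (0:ℝ) 1, f'' r * g r - f r * g'' r
        = c / r ^ 2 * (f r * g r) - ((N:ℝ)-1)/r * (f' r * g r - f r * g' r))
    (hgpos : ∀ r ∈ Ioo (0:ℝ) 1, 0 < g r)
    (hf1 : f 1 = 0)
    (rb : ℝ) (hrb : rb ∈ Ioo (0:ℝ) 1) (hfrb : 0 < f rb) : False := by
  have hfd0 : ∀ r ∈ Ioo (0:ℝ) 1, HasDerivAt f (f' r) r := fun r hr =>
    (hfd r (Ioo_subset_Icc_self hr)).hasDerivAt (Icc_mem_nhds hr.1 hr.2)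
  set W : ℝ → ℝ := fun r => r ^ (N-1) * (f' r * g r - f r * g' r) with hWdef
  -- derivative of W
  have hWd : ∀ r ∈ Ioo (0:ℝ) 1,
      HasDerivAt W (c * r^(N-1) / r^2 * (f r * g r)) r := by
    intro r hr
    have hr0 : (0:ℝ) < r := hr.1
    have h2 : HasDerivAt (fun x => f' x * g x - f x * g' x)
        (c / r ^ 2 * (f r * g r) - ((N:ℝ)-1)/r * (f' r * g r - f r * g' r)) r := by
      have h : HasDerivAt (fun x => f' x * g x - f x * g' x)
          (f'' r * g r + f' r * g' r - (f' r * g' r + f r * g'' r)) r :=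
        ((hfd' r hr).mul (hgd r hr)).sub ((hfd0 r hr).mul (hgd' r hr))
      convert h using 1
      linear_combination -(hwr r hr)
    have h1 : HasDerivAt (fun x : ℝ => x ^ (N-1)) (((N-1 : ℕ) : ℝ) * r^(N-1-1)) r :=
      hasDerivAt_pow _ _
    have h3 : HasDerivAt (fun x => x ^ (N-1) * (f' x * g x - f x * g' x))
        (((N-1 : ℕ) : ℝ) * r^(N-1-1) * (f' r * g r - f r * g' r) +
          r ^ (N-1) * (c / r ^ 2 * (f r * g r) - ((N:ℝ)-1)/r * (f' r * g r - f r * g' r))) r :=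
      h1.mul h2
    convert h3 using 1
    have hNc : ((N - 1 : ℕ) : ℝ) = (N:ℝ) - 1 := by
      have h1N : (1:ℕ) ≤ N := by omega
      push_cast [Nat.cast_sub h1N]; ring
    have hpow : r ^ (N-1) = r ^ (N-1-1) * r := by
      rw [← pow_succ]; congr 1; omega
    rw [hNc, hpow]
    field_simp
    ring
  have hsub01 : ∀ {s t : ℝ}, 0 < s → t < 1 → Icc s t ⊆ Ioo 0 1 := by
    intro s t hs ht x hx
    exact ⟨lt_of_lt_of_le hs hx.1, lt_of_le_of_lt hx.2 ht⟩
  -- monotonicity of W on intervals where f ≥ 0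
  have monoW : ∀ s t : ℝ, 0 < s → s ≤ t → t < 1 → (∀ x ∈ Ioo s t, 0 ≤ f x) → W s ≤ W t := by
    intro s t hs hst ht hpos
    have hsub : Icc s t ⊆ Ioo 0 1 := hsub01 hs ht
    have := monotoneOn_of_deriv_nonneg (convex_Icc s t)
      (fun x hx => ((hWd x (hsub hx)).continuousAt).continuousWithinAt)
      (fun x hx => by
        rw [interior_Icc] at hx
        exact ((hWd x (hsub (Ioo_subset_Icc_self hx))).differentiableAt).differentiableWithinAt)
      (fun x hx => by
        rw [interior_Icc] at hx
        have hx' := hsub (Ioo_subset_Icc_self hx)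
        rw [(hWd x hx').deriv]
        have hx0 : (0:ℝ) < x := hx'.1
        have hf0 : 0 ≤ f x := hpos x hx
        have : (0:ℝ) < c * x^(N-1) / x^2 := by positivity
        exact mul_nonneg this.le (mul_nonneg hf0 (hgpos x hx').le))
    exact this (left_mem_Icc.2 hst) (right_mem_Icc.2 hst) hst
  have strictW : ∀ s t : ℝ, 0 < s → s < t → t < 1 → (∀ x ∈ Ioo s t, 0 < f x) → W s < W t := by
    intro s t hs hst ht hpos
    have hsub : Icc s t ⊆ Ioo 0 1 := hsub01 hs ht
    have := strictMonoOn_of_deriv_pos (convex_Icc s t)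
      (fun x hx => ((hWd x (hsub hx)).continuousAt).continuousWithinAt)
      (fun x hx => by
        rw [interior_Icc] at hx
        have hx' := hsub (Ioo_subset_Icc_self hx)
        rw [(hWd x hx').deriv]
        have hx0 : (0:ℝ) < x := hx'.1
        have hf0 : 0 < f x := hpos x hx
        have : (0:ℝ) < c * x^(N-1) / x^2 := by positivity
        exact mul_pos this (mul_pos hf0 (hgpos x hx')))
    exact this (left_mem_Icc.2 hst.le) (right_mem_Icc.2 hst.le) hst
  -- bound on f
  obtain ⟨M0, hM0⟩ := (isCompact_Icc).exists_bound_of_continuousOn hfc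
  set M : ℝ := max M0 1 with hMdef
  have hM1 : (1:ℝ) ≤ M := le_max_right _ _
  have hM : ∀ x ∈ Icc (0:ℝ) 1, f x ≤ M := fun x hx =>
    le_trans (le_trans (le_abs_self _) (hM0 x hx)) (le_max_left _ _)
  -- Lipschitz bound near 1
  obtain ⟨K0, hK0⟩ := (isCompact_Icc).exists_bound_of_continuousOn hf'c
  set K : ℝ := max K0 1 with hKdef
  have hK1 : (1:ℝ) ≤ K := le_max_right _ _
  have hlip : ∀ r ∈ Icc (0:ℝ) 1, f r ≤ K * (1 - r) := by
    intro r hr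
    have h := (convex_Icc (0:ℝ) 1).norm_image_sub_le_of_norm_hasDerivWithin_le
      (C := K) hfd (fun x hx => le_trans (hK0 x hx) (le_max_left K0 1))
      (right_mem_Icc.2 zero_le_one) hr
    rw [hf1] at h
    simp only [sub_zero, Real.norm_eq_abs] at h
    have h2 : |r - 1| = 1 - r := by rw [abs_sub_comm]; exact abs_of_nonneg (by linarith [hr.2])
    rw [h2] at h
    exact le_trans (le_abs_self _) h
  -- power comparison facts
  have hpowle : ∀ {r : ℝ}, 0 < r → r ≤ 1 → r ^ (N-1) ≤ r := by
    intro r h0 h1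
    calc r ^ (N-1) ≤ r ^ 1 := pow_le_pow_of_le_one h0.le h1 (by omega)
    _ = r := pow_one r
  -- quotient derivative helpers
  have hvd : ∀ r ∈ Ioo (0:ℝ) 1, f r ≠ 0 → HasDerivAt (fun x => g x / f x)
      ((g' r * f r - g r * f' r)/(f r)^2) r := fun r hr hf0 =>
    (hgd r hr).div (hfd0 r hr) hf0
  have hud : ∀ r ∈ Ioo (0:ℝ) 1, HasDerivAt (fun x => f x / g x)
      ((f' r * g r - f r * g' r)/(g r)^2) r := fun r hr =>
    (hfd0 r hr).div (hgd r hr) (hgpos r hr).ne'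
  -- Claim A
  have claimA : ∃ r0 ∈ Ioc (0:ℝ) rb, 0 < W r0 ∧ ∀ x ∈ Icc r0 rb, 0 < f x := by
    by_cases hL : ∀ t ∈ Ioc (0:ℝ) rb, 0 < f t
    · by_contra hA
      push_neg at hA
      have hWle : ∀ r ∈ Ioc (0:ℝ) rb, W r ≤ 0 := by
        intro r hrr
        by_contra hpos
        push_neg at hpos
        obtain ⟨x, hx, hfx⟩ := hA r hrr hpos
        exact absurd (hL x ⟨lt_of_lt_of_le hrr.1 hx.1, hx.2⟩) (not_lt.2 hfx)
      set s : ℝ := rb/2 with hsdef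
      have hs0 : (0:ℝ) < s := by rw [hsdef]; linarith [hrb.1]
      have hsrb : s < rb := by linarith [hrb.1]
      have hsI : s ∈ Ioo (0:ℝ) 1 := ⟨hs0, lt_trans hsrb hrb.2⟩
      have hWs : W s < 0 :=
        lt_of_lt_of_le
          (strictW s rb hs0 hsrb hrb.2 (fun x hx => hL x ⟨lt_trans hs0 hx.1, hx.2.le⟩))
          (hWle rb ⟨hrb.1, le_refl _⟩)
      set δ : ℝ := -W s with hδdef
      have hδpos : 0 < δ := by simp [hδdef]; linarith
      have hWr : ∀ r ∈ Ioc (0:ℝ) s, W r ≤ -δ := by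
        intro r h
        have := monoW r s h.1 h.2 (lt_trans hsrb hrb.2)
          (fun x hx => (hL x ⟨lt_trans h.1 hx.1, le_trans hx.2.le hsrb.le⟩).le)
        simp [hδdef]; linarith
      set q : ℝ := δ / M^2 with hqdef
      have hMpos : (0:ℝ) < M := lt_of_lt_of_le one_pos hM1
      have hqpos : 0 < q := div_pos hδpos (pow_pos hMpos 2)
      set G : ℝ → ℝ := fun x => g x / f x - q * Real.log x with hGdef
      have hGd : ∀ r ∈ Ioo (0:ℝ) rb, HasDerivAt G
          ((g' r * f r - g r * f' r)/(f r)^2 - q * r⁻¹) r := by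
        intro r hri
        have hrI : r ∈ Ioo (0:ℝ) 1 := ⟨hri.1, lt_trans hri.2 hrb.2⟩
        have hfpos : 0 < f r := hL r ⟨hri.1, hri.2.le⟩
        exact (hvd r hrI hfpos.ne').sub ((Real.hasDerivAt_log hri.1.ne').const_mul q)
      have hmono : MonotoneOn G (Ioc 0 s) := by
        apply monotoneOn_of_deriv_nonneg (convex_Ioc 0 s)
        · intro x hx
          have hx' : x ∈ Ioo (0:ℝ) rb := ⟨hx.1, lt_of_le_of_lt hx.2 hsrb⟩
          exact ((hGd x hx').continuousAt).continuousWithinAt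
        · intro x hx
          rw [interior_Ioc] at hx
          have hx' : x ∈ Ioo (0:ℝ) rb := ⟨hx.1, lt_trans hx.2 hsrb⟩
          exact ((hGd x hx').differentiableAt).differentiableWithinAt
        · intro x hx
          rw [interior_Ioc] at hx
          have hx' : x ∈ Ioo (0:ℝ) rb := ⟨hx.1, lt_trans hx.2 hsrb⟩
          have hxI : x ∈ Ioo (0:ℝ) 1 := ⟨hx.1, lt_trans hx'.2 hrb.2⟩
          rw [(hGd x hx').deriv]
          have hxp : (0:ℝ) < x ^ (N-1) := pow_pos hx.1 _
          have hfpos : 0 < f x := hL x ⟨hx.1, le_trans hx.2.le hsrb.le⟩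
          have hfp2 : (0:ℝ) < f x ^ 2 := pow_pos hfpos 2
          have hx1 : x ≤ 1 := hxI.2.le
          have hWx : W x ≤ -δ := hWr x ⟨hx.1, hx.2.le⟩
          simp only [hWdef] at hWx
          have hA : δ / x^(N-1) ≤ g' x * f x - g x * f' x := by
            rw [div_le_iff₀ hxp]; nlinarith [hWx]
          have hf2M : f x ^ 2 ≤ M ^ 2 := by
            have := hM x ⟨hx.1.le, hx1⟩
            nlinarith
          have h1 : q * f x ^ 2 ≤ δ := by
            rw [hqdef, div_mul_eq_mul_div, div_le_iff₀ (pow_pos hMpos 2)]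
            nlinarith [hf2M, hδpos]
          have h2 : δ ≤ (g' x * f x - g x * f' x) * x := by
            have h5 : δ ≤ (δ / x^(N-1)) * x := by
              rw [div_mul_eq_mul_div, le_div_iff₀ hxp]
              nlinarith [hpowle hx.1 hx1]
            exact le_trans h5 (mul_le_mul_of_nonneg_right hA hx.1.le)
          have hgoal : q * x⁻¹ ≤ (g' x * f x - g x * f' x) / f x ^ 2 := by
            rw [← div_eq_mul_inv, div_le_div_iff₀ hx.1 hfp2]
            exact le_trans h1 h2
          linarith
      -- conclude contradiction from G monotone
      obtain ⟨r1, hr1pos, hr1s, hq1⟩ :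
          ∃ r1 : ℝ, 0 < r1 ∧ r1 ≤ s ∧ q * Real.log r1 ≤ -(|G s| + 1) := by
        refine ⟨min s (Real.exp ((-(|G s| + 1)) / q)),
          lt_min hs0 (Real.exp_pos _), min_le_left _ _, ?_⟩
        have hlog : Real.log (min s (Real.exp ((-(|G s| + 1)) / q)))
            ≤ (-(|G s| + 1)) / q := by
          have h := Real.log_le_log (lt_min hs0 (Real.exp_pos _))
            (min_le_right s (Real.exp ((-(|G s| + 1)) / q)))
          rwa [Real.log_exp] at h
        have h2 := mul_le_mul_of_nonneg_left hlog hqpos.le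
        rwa [mul_div_cancel₀ _ hqpos.ne'] at h2
      have hG1 : G r1 ≤ G s := hmono ⟨hr1pos, hr1s⟩ (right_mem_Ioc.2 hs0) hr1s
      have hvr1 : g r1 / f r1 - q * Real.log r1 ≤ g s / f s - q * Real.log s := by
        simpa only [hGdef] using hG1
      have hGsle : g s / f s - q * Real.log s ≤ |G s| := by
        have := le_abs_self (G s)
        simpa only [hGdef] using this
      have hvpos : 0 < g r1 / f r1 :=
        div_pos (hgpos r1 ⟨hr1pos, lt_of_le_of_lt hr1s (lt_trans hsrb hrb.2)⟩)
          (hL r1 ⟨hr1pos, le_trans hr1s hsrb.le⟩)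
      linarith
    · push_neg at hL
      obtain ⟨t, ht, hft⟩ := hL
      have htrb : t < rb := lt_of_le_of_ne ht.2 (fun h => by rw [h] at hft; linarith)
      have hAcl : IsClosed (Icc t rb ∩ f ⁻¹' (Iic 0)) :=
        (hfc.mono (fun x hx => ⟨le_trans ht.1.le hx.1, le_trans hx.2 hrb.2.le⟩)).preimage_isClosed_of_isClosed
          isClosed_Icc isClosed_Iic
      have hAne : (Icc t rb ∩ f ⁻¹' (Iic 0)).Nonempty := ⟨t, ⟨left_mem_Icc.2 htrb.le, hft⟩⟩
      have hAbd : BddAbove (Icc t rb ∩ f ⁻¹' (Iic 0)) := ⟨rb, fun x hx => hx.1.2⟩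
      obtain ⟨haA, hat, harb, hfposa⟩ :
          sSup (Icc t rb ∩ f ⁻¹' (Iic 0)) ∈ (Icc t rb ∩ f ⁻¹' (Iic 0)) ∧
          t ≤ sSup (Icc t rb ∩ f ⁻¹' (Iic 0)) ∧
          sSup (Icc t rb ∩ f ⁻¹' (Iic 0)) < rb ∧
          ∀ x ∈ Ioc (sSup (Icc t rb ∩ f ⁻¹' (Iic 0))) rb, 0 < f x := by
        have haA := hAcl.csSup_mem hAne hAbd
        have hat : t ≤ sSup (Icc t rb ∩ f ⁻¹' (Iic 0)) :=
          le_csSup hAbd ⟨left_mem_Icc.2 htrb.le, hft⟩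
        have harb : sSup (Icc t rb ∩ f ⁻¹' (Iic 0)) < rb := by
          rcases lt_or_eq_of_le haA.1.2 with h | h
          · exact h
          · exfalso; have := haA.2; rw [h] at this; exact absurd hfrb (not_lt.2 this)
        refine ⟨haA, hat, harb, fun x hx => ?_⟩
        by_contra h
        push_neg at h
        exact absurd (le_csSup hAbd ⟨⟨le_trans hat hx.1.le, hx.2⟩, h⟩) (not_le.2 hx.1)
      set a : ℝ := sSup (Icc t rb ∩ f ⁻¹' (Iic 0)) with hadef
      have ha0 : 0 < a := lt_of_lt_of_le ht.1 hat
      have haI : a ∈ Ioo (0:ℝ) 1 := ⟨ha0, lt_trans harb hrb.2⟩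
      have hfa0 : f a = 0 := by
        refine le_antisymm haA.2 ?_
        have hne : (𝓝[Ioo a rb] a).NeBot := by
          rw [nhdsWithin_Ioo_eq_nhdsGT harb]
          infer_instance
        have htd : Tendsto f (𝓝[Ioo a rb] a) (𝓝 (f a)) :=
          (hfc a ⟨ha0.le, haI.2.le⟩).mono
            (fun x hx => ⟨(lt_trans ha0 hx.1).le, (lt_trans hx.2 hrb.2).le⟩)
        exact ge_of_tendsto htd
          (eventually_nhdsWithin_of_forall fun x hx => (hfposa x ⟨hx.1, hx.2.le⟩).le)
      by_contra hA2
      push_neg at hA2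
      have hWle : ∀ r ∈ Ioc a rb, W r ≤ 0 := by
        intro r hrr
        by_contra hpos
        push_neg at hpos
        obtain ⟨x, hx, hfx⟩ := hA2 r ⟨lt_trans ha0 hrr.1, hrr.2⟩ hpos
        exact absurd (hfposa x ⟨lt_of_lt_of_le hrr.1 hx.1, hx.2⟩) (not_lt.2 hfx)
      have hsubar : Icc a rb ⊆ Ioo 0 1 := hsub01 ha0 hrb.2
      have hanti : AntitoneOn (fun x => f x / g x) (Icc a rb) := by
        apply antitoneOn_of_deriv_nonpos (convex_Icc a rb)
        · intro x hx
          exact ((hud x (hsubar hx)).continuousAt).continuousWithinAt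
        · intro x hx
          rw [interior_Icc] at hx
          exact ((hud x (hsubar (Ioo_subset_Icc_self hx))).differentiableAt).differentiableWithinAt
        · intro x hx
          rw [interior_Icc] at hx
          have hxI := hsubar (Ioo_subset_Icc_self hx)
          rw [(hud x hxI).deriv]
          have hWx : W x ≤ 0 := hWle x ⟨hx.1, hx.2.le⟩
          simp only [hWdef] at hWx
          have hxp : (0:ℝ) < x ^ (N-1) := pow_pos hxI.1 _
          have hnum : f' x * g x - f x * g' x ≤ 0 := by nlinarith [hWx]
          exact div_nonpos_iff.2 (Or.inr ⟨hnum, (pow_pos (hgpos x hxI) 2).le⟩)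
      have h1 := hanti (left_mem_Icc.2 harb.le) (right_mem_Icc.2 harb.le) harb.le
      simp only [hfa0, zero_div] at h1
      have : 0 < f rb / g rb := div_pos hfrb (hgpos rb hrb)
      linarith
  obtain ⟨r0, hr0, hWr0, hfpos0⟩ := claimA
  have hr0I : r0 ∈ Ioo (0:ℝ) 1 := ⟨hr0.1, lt_of_le_of_lt hr0.2 hrb.2⟩
  -- least zero of f to the right of rb
  have hBcl : IsClosed (Icc rb 1 ∩ f ⁻¹' (Iic 0)) :=
    (hfc.mono (fun x hx => ⟨le_trans hrb.1.le hx.1, hx.2⟩)).preimage_isClosed_of_isClosed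
      isClosed_Icc isClosed_Iic
  have hBne : (Icc rb 1 ∩ f ⁻¹' (Iic 0)).Nonempty :=
    ⟨1, ⟨right_mem_Icc.2 hrb.2.le, by simp [hf1]⟩⟩
  have hBbd : BddBelow (Icc rb 1 ∩ f ⁻¹' (Iic 0)) := ⟨rb, fun x hx => hx.1.1⟩
  obtain ⟨hbB, hrbb, hble, hfposb⟩ :
      sInf (Icc rb 1 ∩ f ⁻¹' (Iic 0)) ∈ (Icc rb 1 ∩ f ⁻¹' (Iic 0)) ∧
      rb < sInf (Icc rb 1 ∩ f ⁻¹' (Iic 0)) ∧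
      sInf (Icc rb 1 ∩ f ⁻¹' (Iic 0)) ≤ 1 ∧
      ∀ x ∈ Ico rb (sInf (Icc rb 1 ∩ f ⁻¹' (Iic 0))), 0 < f x := by
    have hbB := hBcl.csInf_mem hBne hBbd
    have hrbb : rb < sInf (Icc rb 1 ∩ f ⁻¹' (Iic 0)) := by
      rcases lt_or_eq_of_le hbB.1.1 with h | h
      · exact h
      · exfalso; have := hbB.2; rw [← h] at this; exact absurd hfrb (not_lt.2 this)
    refine ⟨hbB, hrbb, hbB.1.2, fun x hx => ?_⟩
    by_contra h
    push_neg at h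
    exact absurd (csInf_le hBbd ⟨⟨hx.1, le_trans hx.2.le hbB.1.2⟩, h⟩) (not_le.2 hx.2)
  set b : ℝ := sInf (Icc rb 1 ∩ f ⁻¹' (Iic 0)) with hbdef
  have hfpos01 : ∀ x ∈ Ico r0 b, 0 < f x := by
    intro x hx
    rcases le_or_gt x rb with h | h
    · exact hfpos0 x ⟨hx.1, h⟩
    · exact hfposb x ⟨h.le, hx.2⟩
  rcases lt_or_eq_of_le hble with hb1 | hb1
  · -- b < 1 : f b = 0 and monotone quotient gives contradiction
    have hbI : b ∈ Ioo (0:ℝ) 1 := ⟨lt_trans hrb.1 hrbb, hb1⟩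
    have hfb : f b = 0 := by
      refine le_antisymm hbB.2 ?_
      have hne : (𝓝[Ioo rb b] b).NeBot := by
        rw [nhdsWithin_Ioo_eq_nhdsLT hrbb]
        infer_instance
      have htd : Tendsto f (𝓝[Ioo rb b] b) (𝓝 (f b)) :=
        (hfc b ⟨hbI.1.le, hb1.le⟩).mono
          (fun x hx => ⟨(lt_trans hrb.1 hx.1).le, (lt_trans hx.2 hb1).le⟩)
      exact ge_of_tendsto htd
        (eventually_nhdsWithin_of_forall fun x hx => (hfposb x ⟨hx.1.le, hx.2⟩).le)
    have hr0b : r0 < b := lt_of_le_of_lt hr0.2 hrbb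
    have hsubb : Icc r0 b ⊆ Ioo 0 1 := hsub01 hr0.1 hb1
    have hWpos : ∀ x ∈ Ioo r0 b, 0 < W x := by
      intro x hx
      exact lt_of_lt_of_le hWr0 (monoW r0 x hr0.1 hx.1.le (lt_trans hx.2 hb1)
        (fun y hy => (hfpos01 y ⟨hy.1.le, lt_trans hy.2 hx.2⟩).le))
    have hmonu : MonotoneOn (fun x => f x / g x) (Icc r0 b) := by
      apply monotoneOn_of_deriv_nonneg (convex_Icc r0 b)
      · intro x hx
        exact ((hud x (hsubb hx)).continuousAt).continuousWithinAt
      · intro x hx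
        rw [interior_Icc] at hx
        exact ((hud x (hsubb (Ioo_subset_Icc_self hx))).differentiableAt).differentiableWithinAt
      · intro x hx
        rw [interior_Icc] at hx
        have hxI := hsubb (Ioo_subset_Icc_self hx)
        rw [(hud x hxI).deriv]
        have hWx : 0 < W x := hWpos x hx
        simp only [hWdef] at hWx
        have hxp : (0:ℝ) < x ^ (N-1) := pow_pos hxI.1 _
        have hnum : 0 ≤ f' x * g x - f x * g' x := by nlinarith [hWx]
        exact div_nonneg hnum (pow_pos (hgpos x hxI) 2).le
    have h1 := hmonu (left_mem_Icc.2 hr0b.le) (right_mem_Icc.2 hr0b.le) hr0b.le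
    simp only [hfb, zero_div] at h1
    have : 0 < f r0 / g r0 := div_pos (hfpos0 r0 ⟨le_refl _, hr0.2⟩) (hgpos r0 hr0I)
    linarith
  · -- b = 1 : f > 0 on [r0, 1), use decay bound at 1
    have hfpos1 : ∀ x ∈ Ico r0 (1:ℝ), 0 < f x := by rw [hb1] at hfpos01; exact hfpos01
    have hWge : ∀ r ∈ Ico r0 (1:ℝ), W r0 ≤ W r := fun r h =>
      monoW r0 r hr0.1 h.1 h.2 (fun y hy => (hfpos1 y ⟨hy.1.le, lt_trans hy.2 h.2⟩).le)
    -- derivative of the auxiliary function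
    have hGd : ∀ r ∈ Ico r0 (1:ℝ), HasDerivAt
        (fun x => g x / f x + (W r0 / K^2) * (1 - x)⁻¹)
        ((g' r * f r - g r * f' r)/(f r)^2 + (W r0 / K^2) * (-(-1)/(1-r)^2)) r := by
      intro r hr
      have hrI : r ∈ Ioo (0:ℝ) 1 := ⟨lt_of_lt_of_le hr0.1 hr.1, hr.2⟩
      have hfpos : 0 < f r := hfpos1 r hr
      have h2 : HasDerivAt (fun x : ℝ => (1 - x)⁻¹) (-(-1)/(1-r)^2) r := by
        have hne : (1:ℝ) - r ≠ 0 := by linarith [hr.2]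
        exact (((hasDerivAt_id r).const_sub 1)).inv hne
      exact (hvd r hrI hfpos.ne').add (h2.const_mul (W r0 / K^2))
    have hanti : AntitoneOn (fun x => g x / f x + (W r0 / K^2) * (1 - x)⁻¹) (Ico r0 1) := by
      apply antitoneOn_of_deriv_nonpos (convex_Ico r0 1)
      · intro x hx
        exact ((hGd x hx).continuousAt).continuousWithinAt
      · intro x hx
        rw [interior_Ico] at hx
        exact ((hGd x ⟨hx.1.le, hx.2⟩).differentiableAt).differentiableWithinAt
      · intro x hx
        rw [interior_Ico] at hx
        have hxm : x ∈ Ico r0 (1:ℝ) := ⟨hx.1.le, hx.2⟩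
        have hxI : x ∈ Ioo (0:ℝ) 1 := ⟨lt_of_lt_of_le hr0.1 hxm.1, hx.2⟩
        rw [(hGd x hxm).deriv]
        have hfpos : 0 < f x := hfpos1 x hxm
        have hfp2 : (0:ℝ) < f x ^ 2 := pow_pos hfpos 2
        have h1mx : (0:ℝ) < 1 - x := by linarith [hx.2]
        have hxp : (0:ℝ) < x ^ (N-1) := pow_pos hxI.1 _
        have hWx : W r0 ≤ W x := hWge x hxm
        have hWr0' : 0 < W x := lt_of_lt_of_le hWr0 hWx
        -- X := f' g - f g' ≥ W r0 (since x^(N-1) ≤ 1)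
        have hXge : W r0 ≤ f' x * g x - f x * g' x := by
          have hWxx : W r0 ≤ x ^ (N-1) * (f' x * g x - f x * g' x) := by
            simpa only [hWdef] using hWx
          have hxle1 : x ^ (N-1) ≤ 1 := pow_le_one₀ hxI.1.le hxI.2.le
          nlinarith [hWxx, hWr0, hWr0']
        -- f x ≤ K (1-x), so f² ≤ K² (1-x)²
        have hflip : f x ≤ K * (1 - x) := hlip x ⟨hxI.1.le, hxI.2.le⟩
        have hf2K : f x ^ 2 ≤ K^2 * (1 - x)^2 := by nlinarith [hfpos, hflip, h1mx]
        have hKpos : (0:ℝ) < K := lt_of_lt_of_le one_pos hK1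
        -- (g' f - g f')/f² ≤ - W r0 / f² ≤ - W r0/(K² (1-x)²)
        have hkey : (W r0 / K^2) * (-(-1)/(1-x)^2) ≤ W r0 / f x ^ 2 := by
          have e1 : (W r0 / K^2) * (-(-1)/(1-x)^2) = W r0 / (K^2 * (1-x)^2) := by
            field_simp
          rw [e1]
          exact div_le_div_of_nonneg_left hWr0.le hfp2 hf2K
        have hnum : (g' x * f x - g x * f' x) / f x ^ 2 ≤ (-(W r0)) / f x ^ 2 := by
          gcongr
          nlinarith [hXge]
        have hnd : (-(W r0)) / f x ^ 2 = -(W r0 / f x ^ 2) := neg_div _ _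
        linarith [hnum, hkey]
    -- conclude the contradiction at 1
    have hr01 : r0 < 1 := hr0I.2
    have hDpos : 0 < W r0 / K^2 := div_pos hWr0 (pow_pos (lt_of_lt_of_le one_pos hK1) 2)
    obtain ⟨r1, hr1mem, hbig⟩ : ∃ r1 ∈ Ico r0 (1:ℝ),
        |g r0 / f r0 + (W r0 / K^2) * (1 - r0)⁻¹| + 1
          ≤ (W r0 / K^2) * (1 - r1)⁻¹ := by
      set D : ℝ := W r0 / K^2 with hDdef
      set A : ℝ := |g r0 / f r0 + D * (1 - r0)⁻¹| + 1 with hAdef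
      have hApos : 0 < A := by positivity
      have he1 : (0:ℝ) < 1 - r0 := by linarith
      have he2 : (0:ℝ) < D / A := div_pos hDpos hApos
      set ε : ℝ := min (1 - r0) (D / A) with hεdef
      have hεpos : 0 < ε := lt_min he1 he2
      refine ⟨1 - ε, ⟨by
        have : ε ≤ 1 - r0 := min_le_left _ _
        linarith, by linarith⟩, ?_⟩
      have h3 : (1:ℝ) - (1 - ε) = ε := by ring
      rw [h3]
      have h4 : ε ≤ D / A := min_le_right _ _
      have h5 : A ≤ D / ε := by
        rw [le_div_iff₀ hεpos]
        rw [le_div_iff₀ hApos] at h4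
        nlinarith [h4]
      rw [div_eq_mul_inv] at h5
      exact h5
    have h6 := hanti (left_mem_Ico.2 hr01) hr1mem hr1mem.1
    simp only [] at h6
    have hvpos : 0 < g r1 / f r1 :=
      div_pos (hgpos r1 ⟨lt_of_lt_of_le hr0.1 hr1mem.1, hr1mem.2⟩) (hfpos1 r1 hr1mem)
    have habs : g r0 / f r0 + (W r0 / K^2) * (1 - r0)⁻¹
        ≤ |g r0 / f r0 + (W r0 / K^2) * (1 - r0)⁻¹| := le_abs_self _
    linarith [h6, hbig, hvpos, habs]

set_option maxHeartbeats 1000000 in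
/-- If the Sturm–Liouville operator
`A₁(φ) = φ'' + (N-1)/r φ' - (N-1)/r² φ + (p-1) ρ̃ φ` admits a solution `ξ` that does
not vanish in `(0,1)`, then for every `k ≥ 2` the only solution of `A_k(φ) = 0` on
`(0,1)` with `φ'(0) = 0`, `φ(1) = 0` is `φ = 0`, where `μ_k = k(k+N-2)` and
`A_k = A₁ + (μ_k - μ₁)/r²`. -/
theorem stmt18 (N : ℕ) (hN : 2 ≤ N) (p : ℝ) (hp : 2 < p)
    (ρ : ℝ → ℝ) (hρ : ∀ r ∈ Set.Ioo (0 : ℝ) 1, 0 < ρ r)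
    (ξ : ℝ → ℝ) (hξC : ContDiffOn ℝ 2 ξ (Set.Ioo 0 1))
    (hξ : ∀ r ∈ Set.Ioo (0 : ℝ) 1,
      deriv (deriv ξ) r + ((N : ℝ) - 1) / r * deriv ξ r
        - ((N : ℝ) - 1) / r ^ 2 * ξ r + (p - 1) * ρ r * ξ r = 0)
    (hξne : ∀ r ∈ Set.Ioo (0 : ℝ) 1, ξ r ≠ 0) :
    ∀ k : ℕ, 2 ≤ k → ∀ φ : ℝ → ℝ, ContDiffOn ℝ 2 φ (Set.Icc 0 1) →
      (∀ r ∈ Set.Ioo (0 : ℝ) 1,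
        deriv (deriv φ) r + ((N : ℝ) - 1) / r * deriv φ r
          - ((k : ℝ) * ((k : ℝ) + (N : ℝ) - 2)) / r ^ 2 * φ r
          + (p - 1) * ρ r * φ r = 0) →
      derivWithin φ (Set.Icc 0 1) 0 = 0 → φ 1 = 0 →
      ∀ r ∈ Set.Icc (0 : ℝ) 1, φ r = 0 := by
  intro k hk φ hφC hφODE hφ'0 hφ1
  by_contra hcon
  push_neg at hcon
  obtain ⟨x, hx, hφx⟩ := hcon
  have hφcont : ContinuousOn φ (Icc 0 1) := hφC.continuousOn
  -- find an interior point where φ ≠ 0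
  obtain ⟨rb, hrbI, hφrb⟩ : ∃ r ∈ Ioo (0:ℝ) 1, φ r ≠ 0 := by
    rcases eq_or_lt_of_le hx.1 with h0 | h0
    · -- x = 0
      have hc0 : ContinuousWithinAt φ (Icc 0 1) 0 := hφcont 0 (left_mem_Icc.2 zero_le_one)
      have hne : (𝓝[Ioo (0:ℝ) 1] 0).NeBot := by
        rw [nhdsWithin_Ioo_eq_nhdsGT one_pos]
        infer_instance
      have htd : Filter.Tendsto φ (𝓝[Ioo (0:ℝ) 1] 0) (𝓝 (φ 0)) :=
        hc0.mono Ioo_subset_Icc_self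
      have hφ0ne : φ 0 ≠ 0 := by rw [← h0] at hφx; exact hφx
      have hev : ∀ᶠ y in 𝓝[Ioo (0:ℝ) 1] 0, φ y ≠ 0 := htd.eventually_ne hφ0ne
      obtain ⟨y, hy1, hy2⟩ := (hev.and eventually_mem_nhdsWithin).exists
      exact ⟨y, hy2, hy1⟩
    · rcases eq_or_lt_of_le hx.2 with h1 | h1
      · exact absurd (show φ x = 0 by rw [h1]; exact hφ1) hφx
      · exact ⟨x, ⟨h0, h1⟩, hφx⟩
  -- derivative data for φ
  have hI2 : UniqueDiffOn ℝ (Icc (0:ℝ) 1) := uniqueDiffOn_Icc zero_lt_one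
  have hfd : ∀ t ∈ Icc (0:ℝ) 1,
      HasDerivWithinAt φ (derivWithin φ (Icc 0 1) t) (Icc 0 1) t := fun t ht =>
    (hφC.differentiableOn (by norm_num) t ht).hasDerivWithinAt
  have hf'C1 : ContDiffOn ℝ 1 (derivWithin φ (Icc 0 1)) (Icc 0 1) :=
    hφC.derivWithin hI2 (by norm_num)
  have hf'c : ContinuousOn (derivWithin φ (Icc 0 1)) (Icc 0 1) := hf'C1.continuousOn
  have hfd' : ∀ r ∈ Ioo (0:ℝ) 1,
      HasDerivAt (derivWithin φ (Icc 0 1)) (deriv (derivWithin φ (Icc 0 1)) r) r := fun r hr =>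
    ((hf'C1.differentiableOn one_ne_zero r (Ioo_subset_Icc_self hr)).differentiableAt
      (Icc_mem_nhds hr.1 hr.2)).hasDerivAt
  -- translate the ODE for φ to derivWithin language
  have hODE : ∀ r ∈ Ioo (0:ℝ) 1,
      deriv (derivWithin φ (Icc 0 1)) r
        + ((N : ℝ) - 1) / r * derivWithin φ (Icc 0 1) r
        - ((k : ℝ) * ((k : ℝ) + (N : ℝ) - 2)) / r ^ 2 * φ r
        + (p - 1) * ρ r * φ r = 0 := by
    intro r hr
    have e1 : derivWithin φ (Icc 0 1) r = deriv φ r :=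
      derivWithin_of_mem_nhds (Icc_mem_nhds hr.1 hr.2)
    have e2 : deriv (derivWithin φ (Icc 0 1)) r = deriv (deriv φ) r := by
      apply Filter.EventuallyEq.deriv_eq
      filter_upwards [isOpen_Ioo.mem_nhds hr] with y hy
      exact derivWithin_of_mem_nhds (Icc_mem_nhds hy.1 hy.2)
    rw [e1, e2]
    exact hφODE r hr
  -- derivative data for ξ
  have hgd : ∀ r ∈ Ioo (0:ℝ) 1, HasDerivAt ξ (deriv ξ r) r := fun r hr =>
    ((hξC.differentiableOn (by norm_num) r hr).differentiableAt
      (isOpen_Ioo.mem_nhds hr)).hasDerivAt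
  have hgC1 : ContDiffOn ℝ 1 (deriv ξ) (Ioo 0 1) := by
    have h := hξC.derivWithin (m := 1) isOpen_Ioo.uniqueDiffOn (by norm_num)
    exact h.congr fun y hy => (derivWithin_of_isOpen isOpen_Ioo hy).symm
  have hgd' : ∀ r ∈ Ioo (0:ℝ) 1, HasDerivAt (deriv ξ) (deriv (deriv ξ) r) r := fun r hr =>
    ((hgC1.differentiableOn one_ne_zero r hr).differentiableAt
      (isOpen_Ioo.mem_nhds hr)).hasDerivAt
  -- constant sign of ξ
  have hsign : (∀ r ∈ Ioo (0:ℝ) 1, 0 < ξ r) ∨ (∀ r ∈ Ioo (0:ℝ) 1, ξ r < 0) := by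
    have hhalf : (1/2 : ℝ) ∈ Ioo (0:ℝ) 1 := by norm_num
    have hocon : OrdConnected (Ioo (0:ℝ) 1) := ordConnected_Ioo
    rcases lt_or_gt_of_ne (hξne _ hhalf) with hneg | hpos
    · right
      intro r hr
      by_contra hge
      push_neg at hge
      have hpos' : 0 < ξ r := lt_of_le_of_ne hge (Ne.symm (hξne r hr))
      have hsub : uIcc r (1/2 : ℝ) ⊆ Ioo 0 1 := hocon.uIcc_subset hr hhalf
      have := intermediate_value_uIcc (hξC.continuousOn.mono hsub)
      have h0 : (0:ℝ) ∈ uIcc (ξ r) (ξ (1/2)) := by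
        rw [mem_uIcc]; right; exact ⟨hneg.le, hpos'.le⟩
      obtain ⟨y, hy, hy0⟩ := this h0
      exact hξne y (hsub hy) hy0
    · left
      intro r hr
      by_contra hge
      push_neg at hge
      have hneg' : ξ r < 0 := lt_of_le_of_ne hge (hξne r hr)
      have hsub : uIcc r (1/2 : ℝ) ⊆ Ioo 0 1 := hocon.uIcc_subset hr hhalf
      have := intermediate_value_uIcc (hξC.continuousOn.mono hsub)
      have h0 : (0:ℝ) ∈ uIcc (ξ r) (ξ (1/2)) := by
        rw [mem_uIcc]; left; exact ⟨hneg'.le, hpos.le⟩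
      obtain ⟨y, hy, hy0⟩ := this h0
      exact hξne y (hsub hy) hy0
  obtain ⟨e, hepos⟩ : ∃ e : ℝ, ∀ r ∈ Ioo (0:ℝ) 1, 0 < e * ξ r := by
    rcases hsign with h | h
    · exact ⟨1, fun r hr => by simpa using h r hr⟩
    · exact ⟨-1, fun r hr => by have := h r hr; nlinarith⟩
  obtain ⟨d, hdrb⟩ : ∃ d : ℝ, 0 < d * φ rb := by
    rcases lt_or_gt_of_ne hφrb with h | h
    · exact ⟨-1, by nlinarith⟩
    · exact ⟨1, by nlinarith⟩
  have hcpos : 0 < (k:ℝ) * ((k:ℝ) + (N:ℝ) - 2) - ((N:ℝ) - 1) := by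
    have h2k : (2:ℝ) ≤ (k:ℝ) := by exact_mod_cast hk
    have h2N : (2:ℝ) ≤ (N:ℝ) := by exact_mod_cast hN
    nlinarith
  refine core N hN ((k:ℝ) * ((k:ℝ) + (N:ℝ) - 2) - ((N:ℝ) - 1)) hcpos
    (fun r => d * φ r) (fun r => d * derivWithin φ (Icc 0 1) r)
    (fun r => d * deriv (derivWithin φ (Icc 0 1)) r)
    (fun r => e * ξ r) (fun r => e * deriv ξ r) (fun r => e * deriv (deriv ξ) r)
    (continuousOn_const.mul hφcont)
    (fun t ht => (hfd t ht).const_mul d)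
    (continuousOn_const.mul hf'c)
    (fun r hr => (hfd' r hr).const_mul d)
    (fun r hr => (hgd r hr).const_mul e)
    (fun r hr => (hgd' r hr).const_mul e)
    ?_ hepos (show d * φ 1 = 0 by rw [hφ1]; ring) rb hrbI hdrb
  intro r hr
  have h1 := hODE r hr
  have h2 := hξ r hr
  have hr0 : r ≠ 0 := ne_of_gt hr.1
  linear_combination (d * e * (ξ r)) * h1 - (d * e * (φ r)) * h2
end
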